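/- arXiv:1109.5193 — 3 statements merged into one kernel-verified Lean document; each statement's English description precedes it below -/
import Mathlib

section
/- Let Y_1, ..., Y_n be independent real random variables, f a multilinear polynomial of degree at most q given by f(y) = Σ_{h ∈ H} w_h ∏_{v ∈ h} y_v with H a finite family of distinct subsets of [n] each of size at most q. For r ≥ 0 define μ_r = max over subsets S of [n] with |S| = r of Σ_{h ∈ H, h ⊇ S} |w_h| ∏_{v ∈ h\S} E[|Y_v|]. Then the centered expansion f(Y) = E[f(Y)] + Σ_{h' nonempty} w'_{h'} ∏_{v ∈ h'} (Y_v - E[Y_v]) holds with w'_{h'} = Σ_{h ∈ H, h ⊇ h'} w_h ∏_{v ∈ h\h'} E[Y_v], and moreover μ_r(w', Y) ≤ 2^q · μ_r(w, Y) for every 0 ≤ r ≤ q. -/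
/-!
Write `m v = E[Y_v]` and expand `∏_{v ∈ h} Y_v = ∏_{v ∈ h} ((Y_v - m v) + m v)` over the subsets
`g ⊆ h`; collecting terms gives the centered expansion with coefficients `w'_g`, which vanish for
`|g| > q`, and whose constant term `w'_∅ = Σ_h w_h ∏_{v ∈ h} m v` is `E[f(Y)]` by independence.

Since `|E[Y_v]| ≤ E|Y_v|`, we get `|w'_g| ≤ Σ_{h ⊇ g} |w_h| ∏_{h \ g} E|Y_v|`. Substituting
this into the sum defining `μ_r(w')` at `S` and exchanging the sums, every `h ⊇ S` appears once
for each `g` with `S ⊆ g ⊆ h`, always with the weight `|w_h| ∏_{h \ S} E|Y_v|`; there are at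
most `2^|h| ≤ 2^q` such `g`.
-/

open MeasureTheory ProbabilityTheory

/-- The smoothness parameter `μ_r`: the supremum over vertex sets `S` of size `r` of
`Σ_{h ⊇ S} |w_h| ∏_{v ∈ h \ S} E[|Y_v|]`. -/
noncomputable def muPar (n : ℕ) (H : Finset (Finset (Fin n))) (w : Finset (Fin n) → ℝ)
    (EabsY : Fin n → ℝ) (r : ℕ) : ℝ :=
  sSup {x : ℝ | ∃ S : Finset (Fin n), S.card = r ∧
    x = ∑ h ∈ H.filter (fun h => S ⊆ h), |w h| * ∏ v ∈ h \ S, EabsY v}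

namespace ProbabilityTheory.iIndepFun

variable {Ω ι 𝕜 : Type*} [MeasurableSpace Ω] {μ : Measure Ω} [RCLike 𝕜] {X : ι → Ω → 𝕜}

theorem integrable_finsetProd [IsZeroOrProbabilityMeasure μ] (hX : iIndepFun X μ)
    (hmeas : ∀ i, Measurable (X i)) (hint : ∀ i, Integrable (X i) μ) (s : Finset ι) :
    Integrable (fun ω => ∏ i ∈ s, X i ω) μ := by
  classical
  induction s using Finset.cons_induction with
  | empty => simp
  | cons i s hi ih =>
    have hindep : IndepFun (X i) (fun ω => ∏ j ∈ s, X j ω) μ := by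
      simpa only [Finset.prod_fn] using (hX.indepFun_finsetProd_of_notMem hmeas hi).symm
    simpa only [Finset.prod_cons, Pi.mul_def] using hindep.integrable_mul (hint i) ih

theorem integral_finsetProd_eq_prod_integral (hX : iIndepFun X μ)
    (hmeas : ∀ i, Measurable (X i)) (s : Finset ι) :
    ∫ ω, ∏ i ∈ s, X i ω ∂μ = ∏ i ∈ s, ∫ ω, X i ω ∂μ := by
  simp_rw [← Finset.prod_coe_sort s]
  exact (hX.precomp Subtype.val_injective).integral_fun_prod_eq_prod_integral
    fun i => (hmeas i).aestronglyMeasurable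

theorem integral_sum_mul_finsetProd [IsZeroOrProbabilityMeasure μ] (hX : iIndepFun X μ)
    (hmeas : ∀ i, Measurable (X i)) (hint : ∀ i, Integrable (X i) μ)
    (H : Finset (Finset ι)) (w : Finset ι → 𝕜) :
    ∫ ω, ∑ h ∈ H, w h * ∏ i ∈ h, X i ω ∂μ = ∑ h ∈ H, w h * ∏ i ∈ h, ∫ ω, X i ω ∂μ := by
  rw [integral_finsetSum H fun h _ => (hX.integrable_finsetProd hmeas hint h).const_mul (w h)]
  simp_rw [integral_const_mul, hX.integral_finsetProd_eq_prod_integral hmeas]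

end ProbabilityTheory.iIndepFun

theorem Finset.prod_sdiff_mul_prod_sdiff {ι M : Type*} [DecidableEq ι] [CommMonoid M]
    {s t u : Finset ι} (hst : s ⊆ t) (htu : t ⊆ u) (f : ι → M) :
    (∏ v ∈ u \ t, f v) * ∏ v ∈ t \ s, f v = ∏ v ∈ u \ s, f v := by
  rw [← Finset.prod_union (Finset.sdiff_disjoint.mono_right Finset.sdiff_subset),
    Finset.sdiff_union_sdiff_cancel htu hst]

section CenteredCoeff

variable {ι R : Type*} [DecidableEq ι]

/-- The coefficients `w'` of `∑ h ∈ H, w h * ∏ v ∈ h, y v` re-expanded in the variables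
`y v - m v`. With `|w|` and `E|Y_v|` in place of `w` and `m` it is also the sum that `muPar`
maximises. -/
def centeredCoeff [CommSemiring R] (H : Finset (Finset ι)) (w : Finset ι → R) (m : ι → R)
    (g : Finset ι) : R :=
  ∑ h ∈ H.filter (fun h => g ⊆ h), w h * ∏ v ∈ h \ g, m v

section CommRing

variable [CommRing R] (H : Finset (Finset ι)) (w : Finset ι → R) (m : ι → R)

theorem sum_mul_prod_eq_sum_centeredCoeff [Fintype ι] (y : ι → R) :
    ∑ h ∈ H, w h * ∏ v ∈ h, y v = ∑ g, centeredCoeff H w m g * ∏ v ∈ g, (y v - m v) := by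
  have hexpand : ∀ h : Finset ι, ∏ v ∈ h, y v =
      ∑ g ∈ h.powerset, (∏ v ∈ g, (y v - m v)) * ∏ v ∈ h \ g, m v := fun h => by
    simp_rw [← Finset.prod_add, sub_add_cancel]
  simp_rw [hexpand, Finset.mul_sum, centeredCoeff, Finset.sum_mul]
  rw [Finset.sum_comm' (t' := Finset.univ) (s' := fun g => H.filter (fun h => g ⊆ h))
    (fun h g => by simp [and_comm])]
  exact Finset.sum_congr rfl fun g _ => Finset.sum_congr rfl fun h _ => by ring

theorem centeredCoeff_empty : centeredCoeff H w m ∅ = ∑ h ∈ H, w h * ∏ v ∈ h, m v := by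
  simp [centeredCoeff]

theorem centeredCoeff_eq_zero_of_card_lt {q : ℕ} (hcard : ∀ h ∈ H, h.card ≤ q) {g : Finset ι}
    (hg : q < g.card) : centeredCoeff H w m g = 0 := by
  refine Finset.sum_eq_zero fun h hh => absurd ?_ (not_le.2 hg)
  simp only [Finset.mem_filter] at hh
  exact (Finset.card_le_card hh.2).trans (hcard h hh.1)

theorem sum_mul_prod_eq_add_sum_centeredCoeff [Fintype ι] {q : ℕ}
    (hcard : ∀ h ∈ H, h.card ≤ q) (y : ι → R) :
    ∑ h ∈ H, w h * ∏ v ∈ h, y v = ∑ h ∈ H, w h * ∏ v ∈ h, m v +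
      ∑ g ∈ Finset.univ.powerset.filter (fun g : Finset ι => g.Nonempty ∧ g.card ≤ q),
        centeredCoeff H w m g * ∏ v ∈ g, (y v - m v) := by
  have hsupport : Finset.univ.filter (fun g : Finset ι => g.Nonempty ∧ g.card ≤ q) =
      (Finset.univ.erase ∅).filter (fun g => g.card ≤ q) := by
    ext g
    simp [Finset.nonempty_iff_ne_empty]
  rw [sum_mul_prod_eq_sum_centeredCoeff H w m, ← Finset.add_sum_erase _ _ (Finset.mem_univ ∅),
    centeredCoeff_empty, Finset.prod_empty, mul_one, Finset.powerset_univ, hsupport,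
    Finset.sum_filter_of_ne fun g _ hne => not_lt.1 fun hlt => hne ?_]
  rw [centeredCoeff_eq_zero_of_card_lt H w m hcard hlt, zero_mul]

end CommRing

section LinearOrder

variable [CommRing R] [LinearOrder R] [IsStrictOrderedRing R] (H : Finset (Finset ι))
  (w : Finset ι → R)

theorem abs_centeredCoeff_le {m E : ι → R} (hm : ∀ v, |m v| ≤ E v) (g : Finset ι) :
    |centeredCoeff H w m g| ≤ centeredCoeff H (fun h => |w h|) E g := by
  refine (Finset.abs_sum_le_sum_abs _ _).trans (Finset.sum_le_sum fun h _ => ?_)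
  rw [abs_mul, Finset.abs_prod]
  gcongr with v
  exact hm v

theorem centeredCoeff_abs_le_two_pow_mul {q : ℕ} (hcard : ∀ h ∈ H, h.card ≤ q) {E : ι → R}
    (hE : ∀ v, 0 ≤ E v) (G : Finset (Finset ι)) (w' : Finset ι → R)
    (hw' : ∀ g ∈ G, |w' g| ≤ centeredCoeff H (fun h => |w h|) E g) (S : Finset ι) :
    centeredCoeff G (fun g => |w' g|) E S ≤ 2 ^ q * centeredCoeff H (fun h => |w h|) E S := by
  set c : Finset ι → R := fun h => |w h| * ∏ v ∈ h \ S, E v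
  have hc : ∀ h, 0 ≤ c h := fun h =>
    mul_nonneg (abs_nonneg _) (Finset.prod_nonneg fun v _ => hE v)
  have hterm : ∀ g ∈ G.filter (fun g => S ⊆ g),
      |w' g| * ∏ v ∈ g \ S, E v ≤ ∑ h ∈ H.filter (fun h => g ⊆ h), c h := by
    intro g hg
    have hSg : S ⊆ g := (Finset.mem_filter.1 hg).2
    calc |w' g| * ∏ v ∈ g \ S, E v
        ≤ centeredCoeff H (fun h => |w h|) E g * ∏ v ∈ g \ S, E v := by
          gcongr
          · exact Finset.prod_nonneg fun v _ => hE v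
          · exact hw' g (Finset.mem_filter.1 hg).1
      _ = ∑ h ∈ H.filter (fun h => g ⊆ h), c h := by
          rw [centeredCoeff, Finset.sum_mul]
          refine Finset.sum_congr rfl fun h hh => ?_
          rw [mul_assoc, Finset.prod_sdiff_mul_prod_sdiff hSg (Finset.mem_filter.1 hh).2]
  have hcount : ∀ h ∈ H, ((G.filter (fun g => S ⊆ g ∧ g ⊆ h)).card : R) ≤ 2 ^ q := by
    intro h hh
    have hsub : G.filter (fun g => S ⊆ g ∧ g ⊆ h) ⊆ h.powerset := fun g hg =>
      Finset.mem_powerset.2 (Finset.mem_filter.1 hg).2.2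
    calc ((G.filter (fun g => S ⊆ g ∧ g ⊆ h)).card : R) ≤ (2 : R) ^ h.card := by
          exact_mod_cast (Finset.card_le_card hsub).trans (Finset.card_powerset h).le
      _ ≤ 2 ^ q := pow_le_pow_right₀ one_le_two (hcard h hh)
  calc centeredCoeff G (fun g => |w' g|) E S
      ≤ ∑ g ∈ G.filter (fun g => S ⊆ g), ∑ h ∈ H.filter (fun h => g ⊆ h), c h :=
        Finset.sum_le_sum hterm
    _ = ∑ h ∈ H.filter (fun h => S ⊆ h), ∑ g ∈ G.filter (fun g => S ⊆ g ∧ g ⊆ h), c h :=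
        Finset.sum_comm' fun g h => by
          simp only [Finset.mem_filter]
          exact ⟨fun ⟨⟨hG, hSg⟩, hH, hgh⟩ => ⟨⟨hG, hSg, hgh⟩, hH, hSg.trans hgh⟩,
            fun ⟨⟨hG, hSg, hgh⟩, hH, _⟩ => ⟨⟨hG, hSg⟩, hH, hgh⟩⟩
    _ ≤ ∑ h ∈ H.filter (fun h => S ⊆ h), 2 ^ q * c h := by
        refine Finset.sum_le_sum fun h hh => ?_
        rw [Finset.sum_const, nsmul_eq_mul]
        exact mul_le_mul_of_nonneg_right (hcount h (Finset.mem_filter.1 hh).1) (hc h)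
    _ = 2 ^ q * centeredCoeff H (fun h => |w h|) E S := (Finset.mul_sum _ _ _).symm

end LinearOrder

end CenteredCoeff

theorem muPar_le_mul_muPar {n r : ℕ} {H G : Finset (Finset (Fin n))}
    {w w' : Finset (Fin n) → ℝ} {E : Fin n → ℝ} (hE : ∀ v, 0 ≤ E v) {C : ℝ} (hC : 0 ≤ C)
    (hle : ∀ S : Finset (Fin n), S.card = r →
      centeredCoeff G (fun g => |w' g|) E S ≤ C * centeredCoeff H (fun h => |w h|) E S) :
    muPar n G w' E r ≤ C * muPar n H w E r := by
  have hbdd : BddAbove {x : ℝ | ∃ S : Finset (Fin n), S.card = r ∧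
      x = centeredCoeff H (fun h => |w h|) E S} :=
    (Set.finite_range fun S => centeredCoeff H (fun h => |w h|) E S).bddAbove.mono
      (by rintro _ ⟨S, -, rfl⟩; exact ⟨S, rfl⟩)
  have hnonneg : 0 ≤ muPar n H w E r := Real.sSup_nonneg <| by
    rintro _ ⟨S, -, rfl⟩
    exact Finset.sum_nonneg fun h _ =>
      mul_nonneg (abs_nonneg _) (Finset.prod_nonneg fun v _ => hE v)
  refine Real.sSup_le ?_ (mul_nonneg hC hnonneg)
  rintro _ ⟨S, hS, rfl⟩
  exact (hle S hS).trans (mul_le_mul_of_nonneg_left (le_csSup hbdd ⟨S, hS, rfl⟩) hC)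

/-- Centered expansion of a multilinear polynomial, and the bound
`μ_r(w', Y) ≤ 2^q · μ_r(w, Y)` for the centered coefficients. -/
theorem stmt_17 {Ω : Type*} [MeasurableSpace Ω] (μ : Measure Ω) [IsProbabilityMeasure μ]
    (n q : ℕ) (Y : Fin n → Ω → ℝ)
    (hmeas : ∀ v, Measurable (Y v))
    (hindep : iIndepFun Y μ)
    (hint : ∀ v, Integrable (Y v) μ)
    (H : Finset (Finset (Fin n))) (hcard : ∀ h ∈ H, h.card ≤ q)
    (w : Finset (Fin n) → ℝ)
    (w' : Finset (Fin n) → ℝ)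
    (hw' : ∀ h' : Finset (Fin n),
      w' h' = ∑ h ∈ H.filter (fun h => h' ⊆ h), w h * ∏ v ∈ h \ h', ∫ ω, Y v ω ∂μ) :
    (∀ ω, ∑ h ∈ H, w h * ∏ v ∈ h, Y v ω =
      (∫ ω', ∑ h ∈ H, w h * ∏ v ∈ h, Y v ω' ∂μ) +
        ∑ h' ∈ Finset.univ.powerset.filter
            (fun h' : Finset (Fin n) => h'.Nonempty ∧ h'.card ≤ q),
          w' h' * ∏ v ∈ h', (Y v ω - ∫ ω', Y v ω' ∂μ)) ∧
    (∀ r : ℕ, r ≤ q →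
      muPar n (Finset.univ.powerset.filter (fun h' : Finset (Fin n) => h'.card ≤ q)) w'
          (fun v => ∫ ω, |Y v ω| ∂μ) r ≤
        2 ^ q * muPar n H w (fun v => ∫ ω, |Y v ω| ∂μ) r) := by
  obtain rfl : w' = centeredCoeff H w (fun v => ∫ ω, Y v ω ∂μ) := funext hw'
  refine ⟨fun ω => ?_, fun r _ => ?_⟩
  · rw [hindep.integral_sum_mul_finsetProd hmeas hint]
    exact sum_mul_prod_eq_add_sum_centeredCoeff H w _ hcard (Y · ω)
  · have hE : ∀ v, 0 ≤ ∫ ω, |Y v ω| ∂μ := fun v => integral_nonneg fun ω => abs_nonneg _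
    have hm : ∀ v, |∫ ω, Y v ω ∂μ| ≤ ∫ ω, |Y v ω| ∂μ := fun v => abs_integral_le_integral_abs
    exact muPar_le_mul_muPar hE (by positivity) fun S _ =>
      centeredCoeff_abs_le_two_pow_mul H w hcard hE _ _
        (fun g _ => abs_centeredCoeff_le H w hm g) S
end

section
/- Let Y_1, ..., Y_n be independent central moment bounded random variables with common parameter L > 0, and let f be a multilinear polynomial of degree at most q with coefficients w_h over a finite family of subsets of [n]. Then Var[f(Y)] ≤ 2q·4^q · max_{r ∈ [q]} ( μ_0(f,Y) · μ_r(f,Y) · 4^r · L^r ), where μ_r(f,Y) = max_{S ⊆ [n], |S| = r} Σ_{h ⊇ S} |w_h| ∏_{v ∈ h\S} E[|Y_v|]. -/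
/-
Expanding the variance bilinearly, `Var f = Σ_{h,h'} w_h w_{h'} Cov(Y^h, Y^{h'})` with
`Y^h = ∏_{v ∈ h} Y_v`. By independence, with `T = h ∩ h'`,
`Cov(Y^h, Y^{h'}) = ∏_{v ∈ h ∆ h'} E[Y_v] · Σ_{∅ ≠ S ⊆ T} ∏_{v ∈ S} Var[Y_v] ∏_{v ∈ T \ S} E[Y_v]²`,
and the central moment bound with `i = 2` gives `Var[Y_v] ≤ 4L·E|Y_v|`. Hence
`|Cov(Y^h, Y^{h'})| ≤ ∏_{v ∈ h} E|Y_v| · Σ_{∅ ≠ S ⊆ T} (4L)^|S| ∏_{v ∈ h' \ S} E|Y_v|`.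
For fixed `h` and `S`, summing `|w_{h'}|` times the last product over `h' ⊇ S` gives at most
`μ_{|S|}`; each `h` has fewer than `2^q` subsets `S`, and summing `|w_h| ∏_{v ∈ h} E|Y_v|` over `h`
gives `μ_0`. Finally `2^q ≤ 2q·4^q`.
-/

open MeasureTheory ProbabilityTheory

open Finset

namespace Finset

variable {ι : Type*} [DecidableEq ι]

lemma prod_mul_prod_eq_prod_union_pow {M : Type*} [CommMonoid M] (s t : Finset ι) (f : ι → M) :
    (∏ i ∈ s, f i) * ∏ i ∈ t, f i = ∏ i ∈ s ∪ t, f i ^ (if i ∈ s ∩ t then 2 else 1) := by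
  have hpow : ∀ i, f i ^ (if i ∈ s ∩ t then 2 else 1) = f i * if i ∈ s ∩ t then f i else 1 := by
    intro i; split_ifs <;> simp [sq]
  rw [← prod_union_inter, prod_congr rfl fun i _ ↦ hpow i, prod_mul_distrib, prod_ite_mem,
    inter_eq_right.mpr inter_subset_union]

lemma prod_ite_of_subset {M : Type*} [CommMonoid M] {s t : Finset ι} (hts : t ⊆ s)
    (f g : ι → M) :
    ∏ i ∈ s, (if i ∈ t then f i else g i) = (∏ i ∈ t, f i) * ∏ i ∈ s \ t, g i := by
  rw [prod_ite, filter_mem_eq_inter, inter_eq_right.mpr hts, filter_notMem_eq_sdiff]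

lemma prod_mul_prod_eq_prod_inter_sq_mul_prod_sdiff {M : Type*} [CommMonoid M] (s t : Finset ι)
    (f : ι → M) :
    (∏ i ∈ s, f i) * ∏ i ∈ t, f i = (∏ i ∈ s ∩ t, f i ^ 2) * ∏ i ∈ (s ∪ t) \ (s ∩ t), f i := by
  rw [prod_mul_prod_eq_prod_union_pow, ← prod_ite_of_subset inter_subset_union]
  exact prod_congr rfl fun i _ ↦ by split_ifs <;> simp

lemma prod_mul_prod_sdiff_of_subset_inter {M : Type*} [CommMonoid M] {s t u : Finset ι}
    (hu : u ⊆ s ∩ t) (f : ι → M) :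
    (∏ i ∈ s, f i) * ∏ i ∈ t \ u, f i =
      (∏ i ∈ (s ∪ t) \ (s ∩ t), f i) * ((∏ i ∈ u, f i) * ∏ i ∈ (s ∩ t) \ u, f i ^ 2) := by
  have hus : u ⊆ s := hu.trans inter_subset_left
  have hunion : s ∪ t \ u = s ∪ t := by
    ext i; have := @hus i; simp only [mem_union, mem_sdiff]; tauto
  rw [← prod_union_inter, hunion, ← inter_sdiff_assoc,
    ← prod_sdiff (inter_subset_union : s ∩ t ⊆ s ∪ t),
    ← prod_sdiff (sdiff_subset : (s ∩ t) \ u ⊆ s ∩ t),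
    sdiff_sdiff_eq_self hu, prod_pow, sq]
  ac_rfl

lemma prod_add_sub_prod_eq_sum {R : Type*} [CommRing R] (s : Finset ι) (f g : ι → R) :
    ∏ i ∈ s, (f i + g i) - ∏ i ∈ s, g i =
      ∑ t ∈ s.powerset.erase ∅, (∏ i ∈ t, f i) * ∏ i ∈ s \ t, g i := by
  rw [prod_add, ← add_sum_erase _ _ (empty_mem_powerset s)]
  simp

end Finset

namespace ProbabilityTheory

section IndependentProducts

variable {Ω ι : Type*} [MeasurableSpace Ω] {μ : Measure Ω} {X : ι → Ω → ℝ}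

lemma iIndepFun.integrable_finset_prod (hX : iIndepFun X μ)
    (hmeas : ∀ i, Measurable (X i)) {s : Finset ι} (hint : ∀ i ∈ s, Integrable (X i) μ) :
    Integrable (fun ω ↦ ∏ i ∈ s, X i ω) μ := by
  have := hX.isProbabilityMeasure
  classical
  induction s using Finset.induction_on with
  | empty => simp
  | insert j s hj ih =>
    have hind : IndepFun (∏ i ∈ s, X i) (X j) μ := hX.indepFun_finsetProd_of_notMem hmeas hj
    have hs : Integrable (∏ i ∈ s, X i) μ := by
      simpa only [Finset.prod_fn] using ih fun i hi ↦ hint i (mem_insert_of_mem hi)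
    simpa only [prod_insert hj, mul_comm (X j _), Finset.prod_fn, Pi.mul_def] using
      hind.integrable_mul hs (hint j (mem_insert_self j s))

lemma iIndepFun.integral_finset_prod (hX : iIndepFun X μ)
    (hmeas : ∀ i, Measurable (X i)) (s : Finset ι) :
    ∫ ω, ∏ i ∈ s, X i ω ∂μ = ∏ i ∈ s, ∫ ω, X i ω ∂μ := by
  have h := (hX.precomp (g := ((↑) : s → ι)) Subtype.val_injective)
    |>.integral_fun_prod_eq_prod_integral fun i ↦ (hmeas i).aestronglyMeasurable
  rw [prod_coe_sort s fun i ↦ ∫ ω, X i ω ∂μ] at h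
  rw [← h]
  congr with ω
  exact (prod_coe_sort s fun i ↦ X i ω).symm

end IndependentProducts

section Monomials

variable {Ω ι : Type*} [MeasurableSpace Ω] {μ : Measure Ω} {Y : ι → Ω → ℝ}

lemma iIndepFun.integral_finset_prod_pow (hindep : iIndepFun Y μ)
    (hmeas : ∀ v, Measurable (Y v)) (k : ι → ℕ) (s : Finset ι) :
    ∫ ω, ∏ v ∈ s, Y v ω ^ k v ∂μ = ∏ v ∈ s, ∫ ω, Y v ω ^ k v ∂μ :=
  (hindep.comp (fun v x ↦ x ^ k v) fun _ ↦ measurable_id.pow_const _).integral_finset_prod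
    (fun v ↦ (hmeas v).pow_const _) s

lemma iIndepFun.memLp_finset_prod (hindep : iIndepFun Y μ)
    (hmeas : ∀ v, Measurable (Y v)) (hY : ∀ v, MemLp (Y v) 2 μ) (s : Finset ι) :
    MemLp (fun ω ↦ ∏ v ∈ s, Y v ω) 2 μ := by
  refine (memLp_two_iff_integrable_sq
    (Finset.measurable_prod s fun v _ ↦ hmeas v).aestronglyMeasurable).2 ?_
  simp_rw [← prod_pow]
  exact (hindep.comp (fun _ x ↦ x ^ 2) fun _ ↦ measurable_id.pow_const 2).integrable_finset_prod
    (fun v ↦ (hmeas v).pow_const 2) fun v _ ↦ (hY v).integrable_sq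

lemma iIndepFun.integral_finset_prod_mul_prod [DecidableEq ι]
    (hindep : iIndepFun Y μ) (hmeas : ∀ v, Measurable (Y v)) (s t : Finset ι) :
    ∫ ω, (∏ v ∈ s, Y v ω) * ∏ v ∈ t, Y v ω ∂μ =
      (∏ v ∈ s ∩ t, ∫ ω, Y v ω ^ 2 ∂μ) * ∏ v ∈ (s ∪ t) \ (s ∩ t), ∫ ω, Y v ω ∂μ := by
  simp_rw [prod_mul_prod_eq_prod_union_pow]
  rw [hindep.integral_finset_prod_pow hmeas, ← prod_ite_of_subset inter_subset_union]
  refine prod_congr rfl fun v _ ↦ ?_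
  split_ifs <;> simp

lemma iIndepFun.covariance_finset_prod [IsProbabilityMeasure μ] [DecidableEq ι]
    (hindep : iIndepFun Y μ) (hmeas : ∀ v, Measurable (Y v)) (hY : ∀ v, MemLp (Y v) 2 μ)
    (s t : Finset ι) :
    cov[fun ω ↦ ∏ v ∈ s, Y v ω, fun ω ↦ ∏ v ∈ t, Y v ω; μ] =
      (∏ v ∈ (s ∪ t) \ (s ∩ t), μ[Y v]) *
        ∑ S ∈ (s ∩ t).powerset.erase ∅, (∏ v ∈ S, Var[Y v; μ]) * ∏ v ∈ (s ∩ t) \ S, μ[Y v] ^ 2 := by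
  have hsecond : ∀ v, ∫ ω, Y v ω ^ 2 ∂μ = Var[Y v; μ] + μ[Y v] ^ 2 := fun v ↦ by
    rw [variance_eq_sub (hY v)]; simp [Pi.pow_apply]
  rw [covariance_eq_sub (hindep.memLp_finset_prod hmeas hY s) (hindep.memLp_finset_prod hmeas hY t)]
  simp only [Pi.mul_apply]
  rw [hindep.integral_finset_prod_mul_prod hmeas, hindep.integral_finset_prod hmeas,
    hindep.integral_finset_prod hmeas, prod_mul_prod_eq_prod_inter_sq_mul_prod_sdiff,
    prod_congr rfl fun v _ ↦ hsecond v, ← prod_add_sub_prod_eq_sum]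
  ring

lemma iIndepFun.abs_covariance_finset_prod_le [IsProbabilityMeasure μ] [DecidableEq ι]
    (hindep : iIndepFun Y μ) (hmeas : ∀ v, Measurable (Y v)) (hY : ∀ v, MemLp (Y v) 2 μ)
    {K : ℝ} (hK : ∀ v, Var[Y v; μ] ≤ K * ∫ ω, |Y v ω| ∂μ) (s t : Finset ι) :
    |cov[fun ω ↦ ∏ v ∈ s, Y v ω, fun ω ↦ ∏ v ∈ t, Y v ω; μ]| ≤
      (∏ v ∈ s, ∫ ω, |Y v ω| ∂μ) *
        ∑ S ∈ (s ∩ t).powerset.erase ∅, K ^ #S * ∏ v ∈ t \ S, ∫ ω, |Y v ω| ∂μ := by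
  set E : ι → ℝ := fun v ↦ ∫ ω, |Y v ω| ∂μ
  have hE : ∀ v, 0 ≤ E v := fun v ↦ integral_nonneg fun ω ↦ abs_nonneg _
  have hmean : ∀ v, |μ[Y v]| ≤ E v := fun v ↦ abs_integral_le_integral_abs
  have hKE : ∀ v, 0 ≤ K * E v := fun v ↦ (variance_nonneg _ _).trans (hK v)
  have hterm : ∀ S ∈ (s ∩ t).powerset.erase ∅,
      |(∏ v ∈ S, Var[Y v; μ]) * ∏ v ∈ (s ∩ t) \ S, μ[Y v] ^ 2| ≤
        (∏ v ∈ S, K * E v) * ∏ v ∈ (s ∩ t) \ S, E v ^ 2 := by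
    intro S _
    rw [abs_mul, abs_prod, abs_prod]
    refine mul_le_mul (prod_le_prod (fun _ _ ↦ abs_nonneg _) fun v _ ↦ ?_)
      (prod_le_prod (fun _ _ ↦ abs_nonneg _) fun v _ ↦ ?_) (prod_nonneg fun _ _ ↦ abs_nonneg _)
      (prod_nonneg fun v _ ↦ hKE v)
    · rw [abs_of_nonneg (variance_nonneg _ _)]
      exact hK v
    · rw [abs_pow]
      exact pow_le_pow_left₀ (abs_nonneg _) (hmean v) 2
  calc _ = |∏ v ∈ (s ∪ t) \ (s ∩ t), μ[Y v]| *
        |∑ S ∈ (s ∩ t).powerset.erase ∅,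
          (∏ v ∈ S, Var[Y v; μ]) * ∏ v ∈ (s ∩ t) \ S, μ[Y v] ^ 2| := by
        rw [hindep.covariance_finset_prod hmeas hY, abs_mul]
    _ ≤ (∏ v ∈ (s ∪ t) \ (s ∩ t), E v) *
        ∑ S ∈ (s ∩ t).powerset.erase ∅, (∏ v ∈ S, K * E v) * ∏ v ∈ (s ∩ t) \ S, E v ^ 2 := by
        rw [abs_prod]
        exact mul_le_mul (prod_le_prod (fun _ _ ↦ abs_nonneg _) fun v _ ↦ hmean v)
          ((abs_sum_le_sum_abs _ _).trans (sum_le_sum hterm)) (abs_nonneg _)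
          (prod_nonneg fun v _ ↦ hE v)
    _ = _ := by
        rw [mul_sum, mul_sum]
        refine sum_congr rfl fun S hS ↦ ?_
        have key := prod_mul_prod_sdiff_of_subset_inter (mem_powerset.1 (mem_of_mem_erase hS)) E
        rw [prod_mul_distrib, prod_const]
        linear_combination -(K ^ #S) * key

end Monomials

end ProbabilityTheory

section Variance

variable {Ω : Type*} [MeasurableSpace Ω] {μ : Measure Ω}

lemma variance_fun_sum_const_mul [IsFiniteMeasure μ] {κ : Type*} {Z : κ → Ω → ℝ}
    (hZ : ∀ i, MemLp (Z i) 2 μ) (s : Finset κ) (c : κ → ℝ) :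
    Var[fun ω ↦ ∑ i ∈ s, c i * Z i ω; μ] = ∑ i ∈ s, ∑ j ∈ s, c i * c j * cov[Z i, Z j; μ] := by
  have hcZ : ∀ i ∈ s, MemLp (fun ω ↦ c i * Z i ω) 2 μ := fun i _ ↦ (hZ i).const_mul (c i)
  rw [← covariance_self (Finset.aemeasurable_fun_sum s fun i hi ↦ (hcZ i hi).aemeasurable),
    covariance_fun_sum_fun_sum' (X := fun i ω ↦ c i * Z i ω) hcZ hcZ]
  simp only [covariance_const_mul_left, covariance_const_mul_right]
  exact sum_congr rfl fun i _ ↦ sum_congr rfl fun j _ ↦ by ring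

lemma variance_le_four_mul_integral_abs [IsProbabilityMeasure μ] {Z : Ω → ℝ} (hZ : MemLp Z 2 μ)
    {L : ℝ} (hL : 0 ≤ L) (h2 : ∫ ω, |Z ω - μ[Z]| ^ 2 ∂μ ≤ 2 * L * ∫ ω, |Z ω - μ[Z]| ∂μ) :
    Var[Z; μ] ≤ 4 * L * ∫ ω, |Z ω| ∂μ := by
  have hint := hZ.integrable one_le_two
  have hdev : ∫ ω, |Z ω - μ[Z]| ∂μ ≤ 2 * ∫ ω, |Z ω| ∂μ := calc
    ∫ ω, |Z ω - μ[Z]| ∂μ ≤ ∫ ω, (|Z ω| + |μ[Z]|) ∂μ :=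
      integral_mono (hint.sub (integrable_const _)).abs (hint.abs.add (integrable_const _))
        fun ω ↦ abs_sub _ _
    _ = ∫ ω, |Z ω| ∂μ + |μ[Z]| := by
      rw [integral_add hint.abs (integrable_const _), integral_const, probReal_univ, one_smul]
    _ ≤ 2 * ∫ ω, |Z ω| ∂μ := by linarith [abs_integral_le_integral_abs (f := Z) (μ := μ)]
  calc Var[Z; μ] = ∫ ω, |Z ω - μ[Z]| ^ 2 ∂μ := by
        simp_rw [variance_eq_integral hZ.aemeasurable, sq_abs]
    _ ≤ 2 * L * (2 * ∫ ω, |Z ω| ∂μ) := h2.trans (by gcongr)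
    _ = 4 * L * ∫ ω, |Z ω| ∂μ := by ring

end Variance

section SmoothnessParameters

variable {n : ℕ} (H : Finset (Finset (Fin n))) (w : Finset (Fin n) → ℝ) (E : Fin n → ℝ)

lemma le_muPar (S : Finset (Fin n)) :
    ∑ h ∈ H.filter (fun h => S ⊆ h), |w h| * ∏ v ∈ h \ S, E v ≤ muPar n H w E #S := by
  refine le_csSup (Set.Finite.bddAbove ((Set.finite_range fun T : Finset (Fin n) ↦
    ∑ h ∈ H.filter (fun h => T ⊆ h), |w h| * ∏ v ∈ h \ T, E v).subset ?_)) ⟨S, rfl, rfl⟩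
  rintro x ⟨T, -, rfl⟩
  exact ⟨T, rfl⟩

lemma muPar_zero : muPar n H w E 0 = ∑ h ∈ H, |w h| * ∏ v ∈ h, E v := by
  simp [muPar]

lemma muPar_nonneg {E : Fin n → ℝ} (hE : ∀ v, 0 ≤ E v) (r : ℕ) : 0 ≤ muPar n H w E r := by
  refine Real.sSup_nonneg fun x ⟨S, _, hx⟩ ↦ hx ▸ sum_nonneg fun h _ ↦ ?_
  exact mul_nonneg (abs_nonneg _) (prod_nonneg fun v _ ↦ hE v)

variable {q : ℕ} (hq : 1 ≤ q) {E} {K : ℝ}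

lemma sum_mul_sum_powerset_inter_le (hE : ∀ v, 0 ≤ E v) (hK : 0 ≤ K) {h : Finset (Fin n)}
    (hh : #h ≤ q) :
    ∑ h' ∈ H, |w h'| * ∑ S ∈ (h ∩ h').powerset.erase ∅, K ^ #S * ∏ v ∈ h' \ S, E v ≤
      2 ^ q * (Icc 1 q).sup' (nonempty_Icc.2 hq) fun r ↦ muPar n H w E r * K ^ r := by
  set M := (Icc 1 q).sup' (nonempty_Icc.2 hq) fun r ↦ muPar n H w E r * K ^ r
  have hM : 0 ≤ M := (mul_nonneg (muPar_nonneg H w hE 1) (pow_nonneg hK 1)).trans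
    (le_sup' (fun r ↦ muPar n H w E r * K ^ r) (mem_Icc.2 ⟨le_rfl, hq⟩))
  have hterm : ∀ S ∈ h.powerset.erase ∅, K ^ #S * muPar n H w E #S ≤ M := by
    intro S hS
    obtain ⟨hSne, hSh⟩ := mem_erase.1 hS
    rw [mul_comm]
    exact le_sup' (fun r ↦ muPar n H w E r * K ^ r) (mem_Icc.2
      ⟨card_pos.2 (nonempty_iff_ne_empty.2 hSne), (card_le_card (mem_powerset.1 hSh)).trans hh⟩)
  calc _ = ∑ S ∈ h.powerset.erase ∅,
        K ^ #S * ∑ h' ∈ H.filter (fun h' => S ⊆ h'), |w h'| * ∏ v ∈ h' \ S, E v := by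
        simp_rw [mul_sum]
        rw [sum_comm' (t' := h.powerset.erase ∅) (s' := fun S ↦ H.filter (fun h' => S ⊆ h'))]
        · exact sum_congr rfl fun S _ ↦ sum_congr rfl fun h' _ ↦ by ring
        · intro h' S
          simp only [mem_erase, mem_powerset, mem_filter, subset_inter_iff]
          tauto
    _ ≤ ∑ S ∈ h.powerset.erase ∅, K ^ #S * muPar n H w E #S :=
        sum_le_sum fun S _ ↦ mul_le_mul_of_nonneg_left (le_muPar H w E S) (pow_nonneg hK _)
    _ ≤ #(h.powerset.erase ∅) * M := by
        simpa only [sum_const, nsmul_eq_mul] using sum_le_sum hterm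
    _ ≤ 2 ^ q * M := by
        gcongr
        calc (#(h.powerset.erase ∅) : ℝ) ≤ #h.powerset := by
              exact_mod_cast card_le_card (erase_subset _ _)
          _ ≤ 2 ^ q := by
              rw [card_powerset]
              exact_mod_cast Nat.pow_le_pow_right two_pos hh

lemma sum_sum_mul_sum_powerset_inter_le (hE : ∀ v, 0 ≤ E v) (hK : 0 ≤ K)
    (hcard : ∀ h ∈ H, #h ≤ q) :
    ∑ h ∈ H, ∑ h' ∈ H, |w h| * |w h'| *
        ((∏ v ∈ h, E v) * ∑ S ∈ (h ∩ h').powerset.erase ∅, K ^ #S * ∏ v ∈ h' \ S, E v) ≤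
      2 ^ q * (Icc 1 q).sup' (nonempty_Icc.2 hq)
        fun r ↦ muPar n H w E 0 * muPar n H w E r * K ^ r := by
  calc _ = ∑ h ∈ H, |w h| * (∏ v ∈ h, E v) *
        ∑ h' ∈ H, |w h'| * ∑ S ∈ (h ∩ h').powerset.erase ∅, K ^ #S * ∏ v ∈ h' \ S, E v := by
        refine sum_congr rfl fun h _ ↦ ?_
        rw [mul_sum]
        exact sum_congr rfl fun h' _ ↦ by ring
    _ ≤ ∑ h ∈ H, |w h| * (∏ v ∈ h, E v) *
        (2 ^ q * (Icc 1 q).sup' (nonempty_Icc.2 hq) fun r ↦ muPar n H w E r * K ^ r) :=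
        sum_le_sum fun h hh ↦ mul_le_mul_of_nonneg_left
          (sum_mul_sum_powerset_inter_le H w hq hE hK (hcard h hh))
          (mul_nonneg (abs_nonneg _) (prod_nonneg fun v _ ↦ hE v))
    _ = _ := by
        rw [← sum_mul, ← muPar_zero, mul_left_comm, mul₀_sup' (muPar_nonneg H w hE 0)]
        simp only [mul_assoc]

end SmoothnessParameters

lemma two_pow_le_two_mul_mul_four_pow {q : ℕ} (hq : 1 ≤ q) : (2 : ℝ) ^ q ≤ 2 * q * 4 ^ q := calc
  (2 : ℝ) ^ q ≤ 4 ^ q := pow_le_pow_left₀ zero_le_two (by norm_num) q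
  _ ≤ 2 * q * 4 ^ q := le_mul_of_one_le_left (by positivity) (by
    have : (1 : ℝ) ≤ q := by exact_mod_cast hq
    linarith)

/-- For independent central moment bounded `Y_v` with common parameter `L > 0` and a
multilinear polynomial `f` of degree at most `q`,
`Var[f(Y)] ≤ 2q·4^q · max_{r ∈ [q]} (μ₀·μ_r·4^r·L^r)`. -/
theorem stmt_18 {Ω : Type*} [MeasurableSpace Ω] (μ : Measure Ω) [IsProbabilityMeasure μ]
    (n q : ℕ) (hq : 1 ≤ q) (Y : Fin n → Ω → ℝ)
    (hmeas : ∀ v, Measurable (Y v))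
    (hindep : iIndepFun Y μ)
    (hmom : ∀ v, ∀ k : ℕ, Integrable (fun ω => |Y v ω| ^ k) μ)
    (L : ℝ) (hL : 0 < L)
    (hcmb : ∀ v, ∀ i : ℕ, 1 ≤ i →
      (∫ ω, |Y v ω - ∫ ω', Y v ω' ∂μ| ^ i ∂μ) ≤
        i * L * ∫ ω, |Y v ω - ∫ ω', Y v ω' ∂μ| ^ (i - 1) ∂μ)
    (H : Finset (Finset (Fin n))) (hcard : ∀ h ∈ H, h.card ≤ q)
    (w : Finset (Fin n) → ℝ) :
    variance (fun ω => ∑ h ∈ H, w h * ∏ v ∈ h, Y v ω) μ ≤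
      2 * q * 4 ^ q * (Finset.Icc 1 q).sup' (Finset.nonempty_Icc.mpr hq)
        (fun r => muPar n H w (fun v => ∫ ω, |Y v ω| ∂μ) 0 *
          muPar n H w (fun v => ∫ ω, |Y v ω| ∂μ) r * 4 ^ r * L ^ r) := by
  set E : Fin n → ℝ := fun v ↦ ∫ ω, |Y v ω| ∂μ
  have hE : ∀ v, 0 ≤ E v := fun v ↦ integral_nonneg fun ω ↦ abs_nonneg _
  have hY : ∀ v, MemLp (Y v) 2 μ := fun v ↦
    (memLp_two_iff_integrable_sq (hmeas v).aestronglyMeasurable).2 (by simpa using hmom v 2)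
  have hvar : ∀ v, Var[Y v; μ] ≤ 4 * L * E v := fun v ↦
    variance_le_four_mul_integral_abs (hY v) hL.le (by simpa using hcmb v 2 one_le_two)
  set M := (Icc 1 q).sup' (nonempty_Icc.2 hq)
    fun r ↦ muPar n H w E 0 * muPar n H w E r * 4 ^ r * L ^ r
  have hM : 0 ≤ M := (mul_nonneg (mul_nonneg (mul_nonneg (muPar_nonneg H w hE 0)
    (muPar_nonneg H w hE 1)) (by positivity)) (by positivity)).trans
    (le_sup' (fun r ↦ muPar n H w E 0 * muPar n H w E r * 4 ^ r * L ^ r) (mem_Icc.2 ⟨le_rfl, hq⟩))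
  calc Var[fun ω ↦ ∑ h ∈ H, w h * ∏ v ∈ h, Y v ω; μ]
      = ∑ h ∈ H, ∑ h' ∈ H, w h * w h' *
          cov[fun ω ↦ ∏ v ∈ h, Y v ω, fun ω ↦ ∏ v ∈ h', Y v ω; μ] :=
        variance_fun_sum_const_mul (hindep.memLp_finset_prod hmeas hY) H w
    _ ≤ ∑ h ∈ H, ∑ h' ∈ H, |w h| * |w h'| *
          ((∏ v ∈ h, E v) * ∑ S ∈ (h ∩ h').powerset.erase ∅, (4 * L) ^ #S * ∏ v ∈ h' \ S, E v) := by
        refine sum_le_sum fun h _ ↦ sum_le_sum fun h' _ ↦ (le_abs_self _).trans ?_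
        rw [abs_mul, abs_mul]
        exact mul_le_mul_of_nonneg_left
          (hindep.abs_covariance_finset_prod_le hmeas hY hvar h h') (by positivity)
    _ ≤ 2 ^ q * M := by
        refine (sum_sum_mul_sum_powerset_inter_le H w hq hE (by positivity) hcard).trans_eq ?_
        congr 1
        exact sup'_congr _ rfl fun r _ ↦ by ring
    _ ≤ 2 * q * 4 ^ q * M := mul_le_mul_of_nonneg_right (two_pow_le_two_mul_mul_four_pow hq) hM
end

section
/- Let G' be a finite hypergraph with k hyperedges, c connected components, and every vertex of degree at least 2. Then there exist two disjoint sets of hyperedges S_1 and S_2, each containing exactly one hyperedge per connected component (so |S_1| = |S_2| = c), and an ordering h^(1), ..., h^(k) of the hyperedges such that: (i) {h^(1),...,h^(c)} = S_2 and {h^(k-c+1),...,h^(k)} = S_1; and (ii) for every s with 1 ≤ s ≤ k - c, the subhypergraph induced by the hyperedges h^(s), ..., h^(k) has exactly c connected components. -/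
/-!
Work in the intersection graph of the hyperedges, which has no isolated vertices because every
hyperedge is nonempty and every vertex lies in two hyperedges. Fix a root in each component and let
the depth of a vertex be its distance to the root of its component. Take `S₁` to be the roots and
`S₂` a deepest vertex of each component; a deepest vertex is never a root, since the root has a
neighbour. List `S₂` first, then the remaining vertices by decreasing depth, and the roots last.
Every non-root vertex has a neighbour of smaller depth, which is not in `S₂` and comes later in the
list, so every suffix that contains all roots connects each of its vertices to the root of its
component inside the suffix, and hence has as many components as the whole graph.
-/

/-- The intersection (line) graph of the hyperedges indexed by a subset `T`: two hyperedge
indices are adjacent iff they are distinct and their vertex sets intersect. -/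
def lineGraph {k : ℕ} {V : Type*} [DecidableEq V] (E : Fin k → Finset V) (T : Finset (Fin k)) :
    SimpleGraph {i : Fin k // i ∈ T} where
  Adj i j := i ≠ j ∧ ((E i.1) ∩ (E j.1)).Nonempty
  symm := by
    constructor; intro i j h
    exact ⟨Ne.symm h.1, by rcases h.2 with ⟨v, hv⟩; exact ⟨v, by
      simp only [Finset.mem_inter] at hv ⊢; exact ⟨hv.2, hv.1⟩⟩⟩
  loopless := by constructor; intro i h; exact h.1 rfl

/-- The number of connected components of the subhypergraph induced by hyperedges in `T`. -/
noncomputable def compCount {k : ℕ} {V : Type*} [DecidableEq V] (E : Fin k → Finset V)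
    (T : Finset (Fin k)) : ℕ :=
  Nat.card (lineGraph E T).ConnectedComponent

open Finset

section SortByKey

variable {α β : Type*} [LinearOrder β] {n : ℕ}

theorem exists_equiv_fin_monotone_comp [Fintype α] (key : α → β) (hn : Fintype.card α = n) :
    ∃ e : Fin n ≃ α, Monotone (key ∘ e) := by
  let e₀ : Fin n ≃ α := (Fintype.equivFinOfCardEq hn).symm
  exact ⟨(Tuple.sort (key ∘ e₀)).trans e₀, Tuple.monotone_sort (key ∘ e₀)⟩

variable [DecidableEq α] {key : α → β} {e : Fin n ≃ α}

theorem mem_image_filter_le_of_lt (hmono : Monotone (key ∘ e)) {s : ℕ} {x y : α}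
    (hx : x ∈ image e (univ.filter fun t : Fin n => s ≤ (t : ℕ))) (hxy : key x < key y) :
    y ∈ image e (univ.filter fun t : Fin n => s ≤ (t : ℕ)) := by
  obtain ⟨t, ht, rfl⟩ := mem_image.mp hx
  have hlt : t < e.symm y := hmono.reflect_lt (by simpa using hxy)
  refine mem_image.mpr ⟨e.symm y, ?_, e.apply_symm_apply y⟩
  simp only [mem_filter, mem_univ, true_and] at ht ⊢
  exact ht.trans (Fin.lt_def.mp hlt).le

theorem apply_mem_iff_lt_card (hmono : Monotone (key ∘ e)) {A : Finset α}
    (hA : ∀ a ∈ A, ∀ b ∉ A, key a < key b) (t : Fin n) : e t ∈ A ↔ (t : ℕ) < #A := by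
  let P := univ.filter fun u : Fin n => e u ∈ A
  have hP : #P = #A := by
    rw [← card_map e.toEmbedding]
    congr 1
    ext x
    simp [P]
  have hdown : ∀ u v : Fin n, e v ∈ A → u ≤ v → e u ∈ A := fun u v hv huv => by
    by_contra hu
    exact (hmono.reflect_lt (hA _ hv _ hu)).not_ge huv
  rw [← hP]
  constructor
  · intro ht
    have hsub : Iic t ⊆ P := fun u hu => by simpa [P] using hdown u t ht (mem_Iic.mp hu)
    have := card_le_card hsub
    rw [Fin.card_Iic] at this
    omega
  · intro ht
    by_contra hnt
    have hsub : P ⊆ Iio t := fun u hu => mem_Iio.mpr <| lt_of_not_ge fun htu =>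
      hnt (hdown t u (by simpa [P] using hu) htu)
    have := card_le_card hsub
    rw [Fin.card_Iio] at this
    omega

theorem image_filter_lt_card_eq (hmono : Monotone (key ∘ e)) {A : Finset α}
    (hA : ∀ a ∈ A, ∀ b ∉ A, key a < key b) :
    image e (univ.filter fun t : Fin n => (t : ℕ) < #A) = A := by
  ext x
  rw [mem_image]
  constructor
  · rintro ⟨t, ht, rfl⟩
    exact (apply_mem_iff_lt_card hmono hA t).mpr (mem_filter.mp ht).2
  · intro hx
    refine ⟨e.symm x, mem_filter.mpr ⟨mem_univ _, ?_⟩, e.apply_symm_apply x⟩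
    rwa [← apply_mem_iff_lt_card hmono hA, e.apply_symm_apply]

theorem image_filter_card_sub_le_eq [Fintype α] (hmono : Monotone (key ∘ e))
    (hn : Fintype.card α = n) {A : Finset α} (hA : ∀ a ∈ A, ∀ b ∉ A, key b < key a) :
    image e (univ.filter fun t : Fin n => n - #A ≤ (t : ℕ)) = A := by
  have hAc : ∀ b ∈ Aᶜ, ∀ a ∉ Aᶜ, key b < key a := fun b hb a ha =>
    hA a (by simpa using ha) b (mem_compl.mp hb)
  have hcard : #Aᶜ = n - #A := by rw [card_compl, hn]
  ext x
  rw [mem_image]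
  constructor
  · rintro ⟨t, ht, rfl⟩
    have := (apply_mem_iff_lt_card hmono hAc t).not
    simp only [mem_compl, not_not, hcard] at this
    exact this.mpr (by simpa using ht)
  · intro hx
    refine ⟨e.symm x, mem_filter.mpr ⟨mem_univ _, ?_⟩, e.apply_symm_apply x⟩
    have := (apply_mem_iff_lt_card hmono hAc (e.symm x)).not
    simp only [mem_compl, not_not, hcard, e.apply_symm_apply] at this
    exact not_lt.mp (this.mp hx)

end SortByKey

namespace SimpleGraph

variable {α : Type*} (G : SimpleGraph α)

theorem card_connectedComponent_induce_eq {s : Set α}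
    (hmeet : ∀ C : G.ConnectedComponent, ∃ x ∈ s, G.connectedComponentMk x = C)
    (hreach : ∀ x y (hx : x ∈ s) (hy : y ∈ s), G.Reachable x y →
      (G.induce s).Reachable ⟨x, hx⟩ ⟨y, hy⟩) :
    Nat.card (G.induce s).ConnectedComponent = Nat.card G.ConnectedComponent := by
  refine Nat.card_eq_of_bijective (ConnectedComponent.map (Embedding.induce s).toHom) ⟨?_, ?_⟩
  · refine ConnectedComponent.ind₂ fun x y hxy => ?_
    simp only [ConnectedComponent.map_mk, ConnectedComponent.eq] at hxy ⊢
    exact hreach x y x.2 y.2 hxy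
  · refine fun C => ?_
    obtain ⟨x, hx, rfl⟩ := hmeet C
    exact ⟨(G.induce s).connectedComponentMk ⟨x, hx⟩, rfl⟩

theorem exists_reachable_induce_of_descent {s : Set α} (f : α → ℕ)
    (hdesc : ∀ x ∈ s, f x ≠ 0 → ∃ y ∈ s, G.Adj x y ∧ f y < f x) (x : α) (hx : x ∈ s) :
    ∃ y, ∃ hy : y ∈ s, f y = 0 ∧ (G.induce s).Reachable ⟨x, hx⟩ ⟨y, hy⟩ := by
  induction hfx : f x using Nat.strong_induction_on generalizing x with
  | _ n ih =>
  by_cases h0 : f x = 0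
  · exact ⟨x, hx, h0, .rfl⟩
  obtain ⟨y, hy, hxy, hlt⟩ := hdesc x hx h0
  obtain ⟨z, hz, hfz, hyz⟩ := ih (f y) (hfx ▸ hlt) y hy rfl
  exact ⟨z, hz, hfz, (show (G.induce s).Adj ⟨x, hx⟩ ⟨y, hy⟩ from hxy).reachable.trans hyz⟩

theorem card_eq_card_connectedComponent_of_existsUnique (S : Finset α)
    (h : ∀ C : G.ConnectedComponent, ∃! x, x ∈ S ∧ G.connectedComponentMk x = C) :
    #S = Nat.card G.ConnectedComponent := by
  rw [← Nat.card_eq_finsetCard]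
  refine Nat.card_eq_of_bijective (fun x : S => G.connectedComponentMk x) ⟨?_, fun C => ?_⟩
  · intro x y hxy
    exact Subtype.ext ((h _).unique ⟨x.2, rfl⟩ ⟨y.2, hxy.symm⟩)
  · obtain ⟨x, ⟨hx, rfl⟩, -⟩ := h C
    exact ⟨⟨x, hx⟩, rfl⟩

theorem existsUnique_mem_filter_mk [Fintype α] [DecidableEq α] (g : G.ConnectedComponent → α)
    (hg : ∀ C, G.connectedComponentMk (g C) = C) (C : G.ConnectedComponent) :
    ∃! x, x ∈ univ.filter (fun x => g (G.connectedComponentMk x) = x) ∧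
      G.connectedComponentMk x = C := by
  refine ⟨g C, ⟨by simp [hg], hg C⟩, fun x ⟨hx, hxC⟩ => ?_⟩
  rw [mem_filter, hxC] at hx
  exact hx.2.symm

noncomputable def root (x : α) : α := (G.connectedComponentMk x).out

noncomputable def depth (x : α) : ℕ := G.dist x (G.root x)

variable {G}

@[simp]
theorem connectedComponentMk_root (x : α) :
    G.connectedComponentMk (G.root x) = G.connectedComponentMk x :=
  Quot.out_eq _

theorem reachable_root (x : α) : G.Reachable x (G.root x) :=
  ConnectedComponent.exact (connectedComponentMk_root x).symm

theorem root_eq_root_of_reachable {x y : α} (h : G.Reachable x y) : G.root x = G.root y := by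
  rw [root, root, ConnectedComponent.sound h]

@[simp]
theorem root_root (x : α) : G.root (G.root x) = G.root x :=
  (root_eq_root_of_reachable (reachable_root x)).symm

theorem depth_eq_zero_iff {x : α} : G.depth x = 0 ↔ G.root x = x :=
  (reachable_root x).dist_eq_zero_iff.trans eq_comm

theorem exists_adj_depth_lt {x : α} (hx : G.root x ≠ x) :
    ∃ y, G.Adj x y ∧ G.depth y < G.depth x := by
  obtain ⟨p, hp⟩ := (reachable_root x).exists_walk_length_eq_dist
  obtain ⟨y, hxy, q, rfl⟩ := p.exists_eq_cons_of_ne hx.symm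
  refine ⟨y, hxy, ?_⟩
  have hdy : G.depth y ≤ q.length := by
    rw [depth, ← root_eq_root_of_reachable hxy.reachable]
    exact dist_le q
  have hdx : G.depth x = q.length + 1 := by rw [depth, ← hp, Walk.length_cons]
  omega

theorem exists_forall_depth_le [Finite α] (C : G.ConnectedComponent) :
    ∃ x, G.connectedComponentMk x = C ∧
      ∀ y, G.connectedComponentMk y = C → G.depth y ≤ G.depth x := by
  have : Fintype α := Fintype.ofFinite α
  classical
  obtain ⟨x, hx, hmax⟩ := (univ.filter (G.connectedComponentMk · = C)).exists_max_image G.depth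
    ⟨C.out, mem_filter.mpr ⟨mem_univ _, Quot.out_eq C⟩⟩
  exact ⟨x, (mem_filter.mp hx).2, fun y hy => hmax y (by simp [hy])⟩

theorem deepest_ne_root (hG : ∀ x, ∃ y, G.Adj x y) {deepest : G.ConnectedComponent → α}
    (hdeepest : ∀ C y, G.connectedComponentMk y = C → G.depth y ≤ G.depth (deepest C))
    (x : α) : deepest (G.connectedComponentMk x) ≠ G.root x := by
  intro hx
  obtain ⟨y, hy⟩ := hG (G.root x)
  have hy₀ : G.depth y = 0 := by
    have := hdeepest _ y <| by
      rw [ConnectedComponent.sound hy.symm.reachable, connectedComponentMk_root]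
    rw [hx, depth_eq_zero_iff.mpr (root_root x)] at this
    omega
  have hy_root := depth_eq_zero_iff.mp hy₀
  rw [← root_eq_root_of_reachable hy.reachable, root_root] at hy_root
  exact hy.ne hy_root

theorem exists_adj_depth_lt_ne_deepest {deepest : G.ConnectedComponent → α}
    (hdeepest : ∀ C y, G.connectedComponentMk y = C → G.depth y ≤ G.depth (deepest C))
    {x : α} (hx : G.root x ≠ x) :
    ∃ y, deepest (G.connectedComponentMk y) ≠ y ∧ G.Adj x y ∧ G.depth y < G.depth x := by
  obtain ⟨y, hxy, hlt⟩ := exists_adj_depth_lt hx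
  refine ⟨y, fun hy => ?_, hxy, hlt⟩
  have := hdeepest _ x (ConnectedComponent.sound hxy.reachable)
  rw [hy] at this
  omega

theorem card_connectedComponent_induce_of_descent {s : Set α} (hroot : ∀ x, G.root x ∈ s)
    (hdesc : ∀ x ∈ s, G.root x ≠ x → ∃ y ∈ s, G.Adj x y ∧ G.depth y < G.depth x) :
    Nat.card (G.induce s).ConnectedComponent = Nat.card G.ConnectedComponent := by
  have hto_root : ∀ x (hx : x ∈ s), (G.induce s).Reachable ⟨x, hx⟩ ⟨G.root x, hroot x⟩ := by
    intro x hx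
    obtain ⟨z, hz, hz0, hxz⟩ := G.exists_reachable_induce_of_descent G.depth
      (fun x hx h0 => hdesc x hx (mt depth_eq_zero_iff.mpr h0)) x hx
    obtain rfl : G.root x = z := by
      have hxz' : G.Reachable x z := hxz.map (Embedding.induce s).toHom
      rw [root_eq_root_of_reachable hxz', depth_eq_zero_iff.mp hz0]
    exact hxz
  refine G.card_connectedComponent_induce_eq (fun C => ?_) fun x y hx hy hxy => ?_
  · obtain ⟨x, rfl⟩ := C.exists_rep
    exact ⟨G.root x, hroot x, connectedComponentMk_root x⟩
  · have hxy' : (⟨G.root x, hroot x⟩ : s) = ⟨G.root y, hroot y⟩ :=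
      Subtype.ext (root_eq_root_of_reachable hxy)
    exact (hto_root x hx).trans (hxy' ▸ (hto_root y hy).symm)

section Peeling

variable [DecidableEq α]

-- Sorting by this key lists `S` first and then the other vertices by decreasing depth.
noncomputable def peelKey (G : SimpleGraph α) (S : Finset α) (x : α) : WithBot ℤ :=
  if x ∈ S then ⊥ else ((-G.depth x : ℤ) : WithBot ℤ)

theorem peelKey_lt_of_mem {S : Finset α} {x y : α} (hx : x ∈ S) (hy : y ∉ S) :
    G.peelKey S x < G.peelKey S y := by
  simp [peelKey, hx, hy]

theorem peelKey_lt_of_depth_lt {S : Finset α} {x y : α} (hy : y ∉ S)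
    (h : G.depth y < G.depth x) : G.peelKey S x < G.peelKey S y := by
  by_cases hx : x ∈ S
  · exact peelKey_lt_of_mem hx hy
  · simpa [peelKey, hx, hy] using h

theorem exists_peeling_order [Fintype α] (hG : ∀ x, ∃ y, G.Adj x y) {n : ℕ}
    (hn : Fintype.card α = n) :
    ∃ (S₁ S₂ : Finset α) (e : Fin n ≃ α), Disjoint S₁ S₂ ∧
      #S₁ = Nat.card G.ConnectedComponent ∧ #S₂ = Nat.card G.ConnectedComponent ∧
      (∀ C, ∃! x, x ∈ S₁ ∧ G.connectedComponentMk x = C) ∧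
      (∀ C, ∃! x, x ∈ S₂ ∧ G.connectedComponentMk x = C) ∧
      S₂ = image e (univ.filter fun t : Fin n => (t : ℕ) < Nat.card G.ConnectedComponent) ∧
      S₁ = image e (univ.filter fun t : Fin n => n - Nat.card G.ConnectedComponent ≤ (t : ℕ)) ∧
      ∀ s ≤ n - Nat.card G.ConnectedComponent,
        Nat.card (G.induce (image e (univ.filter fun t : Fin n => s ≤ (t : ℕ)) : Set α)
          ).ConnectedComponent = Nat.card G.ConnectedComponent := by
  choose deepest hdeepest_mk hdeepest_max using G.exists_forall_depth_le
  set S₁ := univ.filter fun x => G.root x = x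
  set S₂ := univ.filter fun x => deepest (G.connectedComponentMk x) = x
  have hS₁_unique : ∀ C, ∃! x, x ∈ S₁ ∧ G.connectedComponentMk x = C :=
    G.existsUnique_mem_filter_mk Quot.out Quot.out_eq
  have hS₂_unique : ∀ C, ∃! x, x ∈ S₂ ∧ G.connectedComponentMk x = C :=
    G.existsUnique_mem_filter_mk deepest hdeepest_mk
  have hS₁_card := G.card_eq_card_connectedComponent_of_existsUnique S₁ hS₁_unique
  have hS₂_card := G.card_eq_card_connectedComponent_of_existsUnique S₂ hS₂_unique
  have hS₁_notMem : ∀ x ∈ S₁, x ∉ S₂ := fun x hx₁ hx₂ => by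
    simp only [S₁, S₂, mem_filter, mem_univ, true_and] at hx₁ hx₂
    exact deepest_ne_root hG hdeepest_max x (hx₂.trans hx₁.symm)
  obtain ⟨e, hmono⟩ := exists_equiv_fin_monotone_comp (G.peelKey S₂) hn
  have hS₂_eq := image_filter_lt_card_eq hmono fun x hx y hy => peelKey_lt_of_mem hx hy
  have hS₁_eq := image_filter_card_sub_le_eq hmono hn (A := S₁) fun x hx y hy =>
    peelKey_lt_of_depth_lt (hS₁_notMem x hx) <| by
      rw [depth_eq_zero_iff.mpr (mem_filter.mp hx).2]
      exact Nat.pos_of_ne_zero (mt depth_eq_zero_iff.mp (by simpa [S₁] using hy))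
  refine ⟨S₁, S₂, e, Finset.disjoint_left.mpr hS₁_notMem, hS₁_card, hS₂_card, hS₁_unique,
    hS₂_unique, by rw [← hS₂_card, hS₂_eq], by rw [← hS₁_card, hS₁_eq], fun s hs => ?_⟩
  have hS₁_sub : S₁ ⊆ image e (univ.filter fun t : Fin n => s ≤ (t : ℕ)) := by
    rw [← hS₁_eq]
    exact image_subset_image (monotone_filter_right _ fun t ht => by omega)
  refine card_connectedComponent_induce_of_descent
    (fun x => hS₁_sub (mem_filter.mpr ⟨mem_univ _, root_root x⟩)) fun x hx hx₀ => ?_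
  obtain ⟨y, hy₂, hxy, hlt⟩ := exists_adj_depth_lt_ne_deepest hdeepest_max hx₀
  have hy : y ∉ S₂ := by simpa [S₂] using hy₂
  exact ⟨y, mem_image_filter_le_of_lt hmono hx (peelKey_lt_of_depth_lt hy hlt), hxy, hlt⟩

end Peeling

end SimpleGraph

section Hypergraph

variable {k : ℕ} {V : Type*} [DecidableEq V] (E : Fin k → Finset V)

def intersectionGraph : SimpleGraph (Fin k) where
  Adj i j := i ≠ j ∧ (E i ∩ E j).Nonempty
  symm := ⟨fun _ _ h => ⟨h.1.symm, inter_comm (E _) _ ▸ h.2⟩⟩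
  loopless := ⟨fun _ h => h.1 rfl⟩

def lineGraphIsoInduce (T : Finset (Fin k)) :
    lineGraph E T ≃g (intersectionGraph E).induce (T : Set (Fin k)) where
  toEquiv := Equiv.refl _
  map_rel_iff' := and_congr_left' Subtype.ext_iff.symm.not

def lineGraphUnivIso : lineGraph E univ ≃g intersectionGraph E where
  toEquiv := Equiv.subtypeUnivEquiv mem_univ
  map_rel_iff' := and_congr_left' Subtype.ext_iff.symm.not

theorem compCount_eq_card_induce (T : Finset (Fin k)) :
    compCount E T =
      Nat.card ((intersectionGraph E).induce (T : Set (Fin k))).ConnectedComponent :=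
  Nat.card_congr (lineGraphIsoInduce E T).connectedComponentEquiv

theorem compCount_univ :
    compCount E univ = Nat.card (intersectionGraph E).ConnectedComponent :=
  Nat.card_congr (lineGraphUnivIso E).connectedComponentEquiv

theorem existsUnique_mem_lineGraph_univ {S : Finset (Fin k)}
    (hS : ∀ C, ∃! i, i ∈ S ∧ (intersectionGraph E).connectedComponentMk i = C)
    (C : (lineGraph E univ).ConnectedComponent) :
    ∃! i, i ∈ S ∧ (lineGraph E univ).connectedComponentMk ⟨i, mem_univ i⟩ = C := by
  have hmk : ∀ i, (lineGraph E univ).connectedComponentMk ⟨i, mem_univ i⟩ = C ↔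
      (intersectionGraph E).connectedComponentMk i =
        (lineGraphUnivIso E).connectedComponentEquiv C := fun i => by
    rw [← (lineGraphUnivIso E).connectedComponentEquiv.apply_eq_iff_eq]
    rfl
  simpa only [hmk] using hS _

theorem intersectionGraph_exists_adj (hE : ∀ i, (E i).Nonempty)
    (hdeg : ∀ v : V, 2 ≤ (univ.filter fun i => v ∈ E i).card) (i : Fin k) :
    ∃ j, (intersectionGraph E).Adj i j := by
  obtain ⟨v, hv⟩ := hE i
  obtain ⟨j, hj, hji⟩ := exists_mem_ne (hdeg v) i
  exact ⟨j, hji.symm, v, mem_inter.mpr ⟨hv, (mem_filter.mp hj).2⟩⟩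

end Hypergraph

theorem stmt_19_general {k : ℕ} {V : Type*} [DecidableEq V]
    (E : Fin k → Finset V) (hE : ∀ i, (E i).Nonempty)
    (hdeg : ∀ v : V, 2 ≤ (Finset.univ.filter (fun i => v ∈ E i)).card)
    (c : ℕ) (hc : c = compCount E Finset.univ) :
    ∃ (S₁ S₂ : Finset (Fin k)) (e : Equiv.Perm (Fin k)),
      Disjoint S₁ S₂ ∧ S₁.card = c ∧ S₂.card = c ∧
      (∀ comp : (lineGraph E Finset.univ).ConnectedComponent,
        ∃! i : Fin k, i ∈ S₁ ∧
          (lineGraph E Finset.univ).connectedComponentMk ⟨i, Finset.mem_univ i⟩ = comp) ∧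
      (∀ comp : (lineGraph E Finset.univ).ConnectedComponent,
        ∃! i : Fin k, i ∈ S₂ ∧
          (lineGraph E Finset.univ).connectedComponentMk ⟨i, Finset.mem_univ i⟩ = comp) ∧
      S₂ = Finset.image e (Finset.univ.filter (fun s : Fin k => (s : ℕ) < c)) ∧
      S₁ = Finset.image e (Finset.univ.filter (fun s : Fin k => k - c ≤ (s : ℕ))) ∧
      (∀ s : ℕ, s < k - c →
        compCount E (Finset.image e (Finset.univ.filter (fun t : Fin k => s ≤ (t : ℕ)))) = c) := by
  rw [compCount_univ] at hc
  subst hc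
  obtain ⟨S₁, S₂, e, hdisj, hS₁_card, hS₂_card, hS₁, hS₂, hS₂_eq, hS₁_eq, hcount⟩ :=
    (intersectionGraph E).exists_peeling_order (intersectionGraph_exists_adj E hE hdeg)
      (Fintype.card_fin k)
  exact ⟨S₁, S₂, e, hdisj, hS₁_card, hS₂_card, existsUnique_mem_lineGraph_univ E hS₁,
    existsUnique_mem_lineGraph_univ E hS₂, hS₂_eq, hS₁_eq,
    fun s hs => (compCount_eq_card_induce E _).trans (hcount s hs.le)⟩

/-- Ordering Lemma: in a hypergraph with `k` hyperedges, `c` connected components and all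
vertex degrees at least `2`, there are disjoint sets `S₁, S₂` of hyperedges, one per
component each, and an ordering of the hyperedges starting with `S₂` and ending with `S₁`
such that every suffix of length at least `c` induces exactly `c` connected components. -/
theorem stmt_19 {k : ℕ} {V : Type*} [Fintype V] [DecidableEq V]
    (E : Fin k → Finset V) (hE : ∀ i, (E i).Nonempty)
    (hdeg : ∀ v : V, 2 ≤ (Finset.univ.filter (fun i => v ∈ E i)).card)
    (c : ℕ) (hc : c = compCount E Finset.univ) :
    ∃ (S₁ S₂ : Finset (Fin k)) (e : Equiv.Perm (Fin k)),
      Disjoint S₁ S₂ ∧ S₁.card = c ∧ S₂.card = c ∧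
      (∀ comp : (lineGraph E Finset.univ).ConnectedComponent,
        ∃! i : Fin k, i ∈ S₁ ∧
          (lineGraph E Finset.univ).connectedComponentMk ⟨i, Finset.mem_univ i⟩ = comp) ∧
      (∀ comp : (lineGraph E Finset.univ).ConnectedComponent,
        ∃! i : Fin k, i ∈ S₂ ∧
          (lineGraph E Finset.univ).connectedComponentMk ⟨i, Finset.mem_univ i⟩ = comp) ∧
      S₂ = Finset.image e (Finset.univ.filter (fun s : Fin k => (s : ℕ) < c)) ∧
      S₁ = Finset.image e (Finset.univ.filter (fun s : Fin k => k - c ≤ (s : ℕ))) ∧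
      (∀ s : ℕ, s < k - c →
        compCount E (Finset.image e (Finset.univ.filter (fun t : Fin k => s ≤ (t : ℕ)))) = c) :=
  stmt_19_general E hE hdeg c hc
end
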